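/- Let m, p be positive integers, A_c an m×m complex matrix, A_s a p×p complex matrix, and G : ℂ^m → ℂ^p continuously differentiable. Fix τ ≥ 0 and define Ψ_τ : ℂ^m → ℂ^p by Ψ_τ(X) = ∫_{−τ}^{0} e^{−s A_s} G(e^{s A_c} X) ds. Then Ψ_τ is differentiable, and for all X ∈ ℂ^m: D Ψ_τ(X)[A_c X] = G(X) − e^{τ A_s} G(e^{−τ A_c} X) + A_s Ψ_τ(X). -/

import Mathlib

open MeasureTheory intervalIntegral

/-- Matrix exponential over `ℂ`. -/
noncomputable def mexp {n : ℕ} (A : Matrix (Fin n) (Fin n) ℂ) : Matrix (Fin n) (Fin n) ℂ :=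
  NormedSpace.exp A

/-!
Differentiating under the integral sign (the integrand is `C¹` in `X` with derivative jointly
continuous in `(X, s)`, and `s` ranges over a compact interval), `DΨ_τ(X)[A_c X]` is the integral of
`e^{-sA_s} DG(e^{sA_c}X)[e^{sA_c} A_c X]`. Since `A_c` commutes with `e^{sA_c}`, this integrand is
`g'(s) + A_s g(s)` for `g(s) = e^{-sA_s} G(e^{sA_c}X)`, and the fundamental theorem of calculus
turns `∫ g'` into the boundary terms `g(0) - g(-τ)`.
-/

section ParametricIntegral

variable {E F : Type*} [NormedAddCommGroup E] [NormedSpace ℝ E]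
  [NormedAddCommGroup F] [NormedSpace ℝ F]

theorem hasFDerivAt_intervalIntegral_of_continuous_fderiv [ProperSpace E]
    {f : E → ℝ → F} {f' : E → ℝ → E →L[ℝ] F}
    (hf : ∀ x, Continuous (f x)) (hf' : Continuous fun q : E × ℝ => f' q.1 q.2)
    (hderiv : ∀ x t, HasFDerivAt (fun y => f y t) (f' x t) x) (a b : ℝ) (x₀ : E) :
    HasFDerivAt (fun x => ∫ t in a..b, f x t) (∫ t in a..b, f' x₀ t) x₀ := by
  obtain ⟨C, hC⟩ := ((isCompact_closedBall x₀ 1).prod isCompact_uIcc).exists_bound_of_continuousOn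
    hf'.continuousOn
  refine hasFDerivAt_integral_of_dominated_of_fderiv_le (bound := fun _ => C)
    (Metric.ball_mem_nhds x₀ one_pos) (.of_forall fun x => (hf x).aestronglyMeasurable)
    ((hf x₀).intervalIntegrable _ _) (hf'.comp (Continuous.prodMk_right x₀)).aestronglyMeasurable
    ?_ intervalIntegrable_const (.of_forall fun t _ x _ => hderiv x t)
  exact .of_forall fun t ht x hx =>
    hC (x, t) ⟨Metric.ball_subset_closedBall hx, Set.uIoc_subset_uIcc ht⟩

theorem hasFDerivAt_intervalIntegral_clm_apply_comp [ProperSpace E]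
    {a : ℝ → E →L[ℝ] E} {b : ℝ → F →L[ℝ] F} {G : E → F}
    (ha : Continuous a) (hb : Continuous b) (hG : ContDiff ℝ 1 G) (α β : ℝ) (x : E) :
    HasFDerivAt (fun y => ∫ s in α..β, b s (G (a s y)))
      (∫ s in α..β, (b s).comp ((fderiv ℝ G (a s x)).comp (a s))) x := by
  have hGc := hG.continuous
  have hG'c := hG.continuous_fderiv one_ne_zero
  refine hasFDerivAt_intervalIntegral_of_continuous_fderiv
    (f' := fun y s => (b s).comp ((fderiv ℝ G (a s y)).comp (a s)))
    (fun y => by fun_prop) (by fun_prop) (fun y s => ?_) α β x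
  exact (b s).hasFDerivAt.comp y
    (((hG.differentiable one_ne_zero) _).hasFDerivAt.comp y (a s).hasFDerivAt)

theorem intervalIntegral_fderiv_comp_apply_generator [CompleteSpace F]
    {a : ℝ → E →L[ℝ] E} {b : ℝ → F →L[ℝ] F} {L : E →L[ℝ] E} {M : F →L[ℝ] F} {G : E → F}
    (ha : ∀ s, HasDerivAt a ((a s).comp L) s) (hb : ∀ s, HasDerivAt b (-M.comp (b s)) s)
    (hG : ContDiff ℝ 1 G) (α β : ℝ) (x : E) :
    (∫ s in α..β, (b s).comp ((fderiv ℝ G (a s x)).comp (a s))) (L x)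
      = b β (G (a β x)) - b α (G (a α x)) + M (∫ s in α..β, b s (G (a s x))) := by
  set g : ℝ → F := fun s => b s (G (a s x))
  set D : ℝ → F := fun s => b s (fderiv ℝ G (a s x) (a s (L x)))
  have hax : ∀ s, HasDerivAt (fun s => a s x) (a s (L x)) s := fun s => by
    simpa using (ha s).clm_apply (hasDerivAt_const s x)
  have hg : ∀ s, HasDerivAt g (-M (g s) + D s) s := fun s =>
    (hb s).clm_apply (((hG.differentiable one_ne_zero) _).hasFDerivAt.comp_hasDerivAt s (hax s))
  have hac : Continuous a := Differentiable.continuous fun s => (ha s).differentiableAt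
  have hbc : Continuous b := Differentiable.continuous fun s => (hb s).differentiableAt
  have hGc := hG.continuous
  have hG'c := hG.continuous_fderiv one_ne_zero
  have hgc : Continuous g := by fun_prop
  have hMg : IntervalIntegrable (fun s => -M (g s)) volume α β := by
    apply Continuous.intervalIntegrable; fun_prop
  have hD : IntervalIntegrable D volume α β := by
    apply Continuous.intervalIntegrable; fun_prop
  have hint : IntervalIntegrable (fun s => (b s).comp ((fderiv ℝ G (a s x)).comp (a s)))
      volume α β := by
    apply Continuous.intervalIntegrable; fun_prop
  calc (∫ s in α..β, (b s).comp ((fderiv ℝ G (a s x)).comp (a s))) (L x)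
      = ∫ s in α..β, D s := ContinuousLinearMap.intervalIntegral_apply hint (L x)
    _ = (∫ s in α..β, -M (g s) + D s) + M (∫ s in α..β, g s) := by
        rw [integral_add hMg hD, intervalIntegral.integral_neg,
          M.intervalIntegral_comp_comm (hgc.intervalIntegrable α β)]
        abel
    _ = g β - g α + M (∫ s in α..β, g s) := by
        rw [integral_eq_sub_of_hasDerivAt (fun s _ => hg s) (hMg.add hD)]

end ParametricIntegral

section MatrixExponential

variable {ι κ : Type*} [Fintype κ]

noncomputable def mulVecCLM (A : Matrix ι κ ℂ) : (κ → ℂ) →L[ℝ] (ι → ℂ) :=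
  LinearMap.toContinuousLinearMap (A.mulVecLin.restrictScalars ℝ)

@[simp] lemma mulVecCLM_apply (A : Matrix ι κ ℂ) (v : κ → ℂ) : mulVecCLM A v = A.mulVec v := rfl

lemma mulVecCLM_mul [Fintype ι] (A : Matrix ι ι ℂ) (B : Matrix ι κ ℂ) :
    mulVecCLM (A * B) = (mulVecCLM A).comp (mulVecCLM B) := by
  ext1 v; simp [Matrix.mulVec_mulVec]

noncomputable def mulVecCLMₗ : Matrix ι κ ℂ →ₗ[ℝ] (κ → ℂ) →L[ℝ] (ι → ℂ) where
  toFun := mulVecCLM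
  map_add' A B := by ext1 v; simp [Matrix.add_mulVec]
  map_smul' r A := by ext1 v; simp [Matrix.smul_mulVec]

attribute [local instance] Matrix.linftyOpNormedAddCommGroup Matrix.linftyOpNormedRing
  Matrix.linftyOpNormedAlgebra

lemma hasDerivAt_mulVecCLM_mexp_smul {n : ℕ} (A : Matrix (Fin n) (Fin n) ℂ) (t : ℝ) :
    HasDerivAt (fun s : ℝ => mulVecCLM (mexp (s • A)))
      ((mulVecCLM (mexp (t • A))).comp (mulVecCLM A)) t := by
  rw [← mulVecCLM_mul]
  exact (LinearMap.toContinuousLinearMap mulVecCLMₗ).hasFDerivAt.comp_hasDerivAt t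
    (hasDerivAt_exp_smul_const A t)

lemma hasDerivAt_mulVecCLM_mexp_neg_smul {n : ℕ} (A : Matrix (Fin n) (Fin n) ℂ) (t : ℝ) :
    HasDerivAt (fun s : ℝ => mulVecCLM (mexp ((-s) • A)))
      (-(mulVecCLM A).comp (mulVecCLM (mexp ((-t) • A)))) t := by
  have h := (LinearMap.toContinuousLinearMap mulVecCLMₗ).hasFDerivAt.comp_hasDerivAt t
    ((hasDerivAt_exp_smul_const' A (-t)).scomp t (hasDerivAt_neg t))
  refine h.congr_deriv ?_
  ext1 v
  -- `h` is stated through the operator-norm topology on matrices; go back to `mulVecCLM`.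
  change mulVecCLM ((-1 : ℝ) • (A * mexp ((-t) • A))) v = _
  simp [Matrix.neg_mulVec]

end MatrixExponential

theorem bf_parameterization_autonomous_homological_equation_general
    (m p : ℕ)
    (A_c : Matrix (Fin m) (Fin m) ℂ) (A_s : Matrix (Fin p) (Fin p) ℂ)
    (G : (Fin m → ℂ) → (Fin p → ℂ)) (hG : ContDiff ℝ 1 G)
    (τ : ℝ)
    (Ψ : (Fin m → ℂ) → (Fin p → ℂ))
    (hΨ : ∀ X, Ψ X =
      ∫ s in (-τ)..0, (mexp ((-s) • A_s)).mulVec (G ((mexp (s • A_c)).mulVec X))) :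
    ∀ X : Fin m → ℂ,
      DifferentiableAt ℝ Ψ X ∧
      fderiv ℝ Ψ X (A_c.mulVec X)
        = G X - (mexp (τ • A_s)).mulVec (G ((mexp ((-τ) • A_c)).mulVec X))
          + A_s.mulVec (Ψ X) := by
  intro X
  have ha := hasDerivAt_mulVecCLM_mexp_smul A_c
  have hb := hasDerivAt_mulVecCLM_mexp_neg_smul A_s
  have hΨ' : HasFDerivAt Ψ _ X := funext hΨ ▸ hasFDerivAt_intervalIntegral_clm_apply_comp
    (Differentiable.continuous fun s => (ha s).differentiableAt)
    (Differentiable.continuous fun s => (hb s).differentiableAt) hG (-τ) 0 X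
  refine ⟨hΨ'.differentiableAt, ?_⟩
  rw [hΨ'.fderiv, ← mulVecCLM_apply A_c, intervalIntegral_fderiv_comp_apply_generator ha hb hG,
    hΨ]
  simp [mexp, NormedSpace.exp_zero]

/-- The autonomous (spatial) part of the homological equation satisfied by
the finite-`τ` Lyapunov–Perron-type integral
`Ψ_τ(X) = ∫_{−τ}^0 e^{−sA_s} G(e^{sA_c}X) ds`:
`D Ψ_τ(X)[A_c X] = G(X) − e^{τA_s} G(e^{−τA_c}X) + A_s Ψ_τ(X)`. -/
theorem bf_parameterization_autonomous_homological_equation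
    (m p : ℕ) (hm : 0 < m) (hp : 0 < p)
    (A_c : Matrix (Fin m) (Fin m) ℂ) (A_s : Matrix (Fin p) (Fin p) ℂ)
    (G : (Fin m → ℂ) → (Fin p → ℂ)) (hG : ContDiff ℝ 1 G)
    (τ : ℝ) (hτ : 0 ≤ τ)
    (Ψ : (Fin m → ℂ) → (Fin p → ℂ))
    (hΨ : ∀ X, Ψ X =
      ∫ s in (-τ)..0, (mexp ((-s) • A_s)).mulVec (G ((mexp (s • A_c)).mulVec X))) :
    ∀ X : Fin m → ℂ,
      DifferentiableAt ℝ Ψ X ∧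
      fderiv ℝ Ψ X (A_c.mulVec X)
        = G X - (mexp (τ • A_s)).mulVec (G ((mexp ((-τ) • A_c)).mulVec X))
          + A_s.mulVec (Ψ X) :=
  bf_parameterization_autonomous_homological_equation_general m p A_c A_s G hG τ Ψ hΨ
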